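/- arXiv:math/0605054 — 5 statements merged into one kernel-verified Lean document; each statement's English description precedes it below -/
import Mathlib

section
/- Let a, b, λ, μ, α, β, r be real numbers with b > 0, λ > 0, μ > 0, α > 0, β > 0, r > 0. Define ψ(z) = a z + (1/2) b² z² + λ z/(α − z) − μ z/(β + z) for z ∈ ℝ \ {α, −β}. Then the equation ψ(z) = r has exactly four real solutions ρ₁ < ρ₂ < ρ₃ < ρ₄, and they satisfy ρ₁ < −β < ρ₂ < 0 < ρ₃ < α < ρ₄. -/
open Polynomial Filter

theorem four_roots
    (a b lam mu alpha beta r : ℝ)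
    (hb : 0 < b) (hlam : 0 < lam) (hmu : 0 < mu)
    (halpha : 0 < alpha) (hbeta : 0 < beta) (hr : 0 < r)
    (psi : ℝ → ℝ)
    (hpsi : ∀ z : ℝ, z ≠ alpha → z ≠ -beta →
      psi z = a * z + (1/2) * b^2 * z^2 + lam * z / (alpha - z) - mu * z / (beta + z)) :
    ∃ ρ₁ ρ₂ ρ₃ ρ₄ : ℝ,
      ρ₁ < -beta ∧ -beta < ρ₂ ∧ ρ₂ < 0 ∧ 0 < ρ₃ ∧ ρ₃ < alpha ∧ alpha < ρ₄ ∧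
      (∀ z : ℝ, z ≠ alpha → z ≠ -beta →
        (psi z = r ↔ z = ρ₁ ∨ z = ρ₂ ∨ z = ρ₃ ∨ z = ρ₄)) := by
  set c4 : ℝ := -(b^2/2) with hc4
  set c3 : ℝ := b^2*(alpha-beta)/2 - a with hc3
  set c2 : ℝ := b^2*alpha*beta/2 + a*(alpha-beta) + r + lam + mu with hc2
  set c1 : ℝ := a*alpha*beta - r*(alpha-beta) + lam*beta - mu*alpha with hc1
  set c0 : ℝ := -(r*alpha*beta) with hc0
  set P : ℝ[X] := C c4 * X^4 + C c3 * X^3 + C c2 * X^2 + C c1 * X + C c0 with hP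
  have hb2 : (0:ℝ) < b^2/2 := by positivity
  have hc4neg : c4 < 0 := by rw [hc4]; linarith
  have hc4ne : c4 ≠ 0 := hc4neg.ne
  have hdeg : P.natDegree = 4 := by rw [hP]; compute_degree!
  have hP0 : P ≠ 0 := fun h => by simp [h] at hdeg
  set f : ℝ → ℝ := fun z => P.eval z with hf
  have hcont : Continuous f := P.continuous_aeval
  have feval : ∀ z : ℝ, f z =
      (a*z + (1/2)*b^2*z^2 - r) * (alpha - z) * (beta + z)
        + lam * z * (beta + z) - mu * z * (alpha - z) := by
    intro z
    simp only [hf, hP, hc4, hc3, hc2, hc1, hc0, eval_add, eval_mul, eval_pow, eval_C, eval_X]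
    ring
  -- key sign evaluations
  have fnegbeta : f (-beta) = mu * beta * (alpha + beta) := by rw [feval]; ring
  have fnegbeta_pos : 0 < f (-beta) := by rw [fnegbeta]; positivity
  have f0 : f 0 = -(r * alpha * beta) := by rw [feval]; ring
  have f0_neg : f 0 < 0 := by
    rw [f0]
    nlinarith [mul_pos (mul_pos hr halpha) hbeta]
  have falpha : f alpha = lam * alpha * (beta + alpha) := by rw [feval]; ring
  have falpha_pos : 0 < f alpha := by rw [falpha]; positivity
  -- degree and leading coefficient facts
  have hdegpos : 0 < P.degree := by
    rw [degree_eq_natDegree hP0, hdeg]; exact_mod_cast (by norm_num : (0:ℕ) < 4)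
  have hlead : P.leadingCoeff = c4 := by
    rw [leadingCoeff, hdeg, hP]
    simp [coeff_X, coeff_one]
  -- tail behavior at +∞
  have htop : Tendsto f atTop atBot :=
    P.tendsto_atBot_of_leadingCoeff_nonpos hdegpos (by rw [hlead]; exact hc4neg.le)
  -- tail behavior at -∞ via composition with -X
  set Pn : ℝ[X] := P.comp (-X) with hPn
  have hPnDeg : Pn.natDegree = 4 := by
    rw [hPn, natDegree_comp, hdeg]
    simp [natDegree_neg]
  have hPn0 : Pn ≠ 0 := fun h => by simp [h] at hPnDeg
  have hPnDegpos : 0 < Pn.degree := by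
    rw [degree_eq_natDegree hPn0, hPnDeg]; exact_mod_cast (by norm_num : (0:ℕ) < 4)
  have hPnlead : Pn.leadingCoeff = c4 := by
    rw [hPn, leadingCoeff_comp (by simp [natDegree_neg] : natDegree (-X : ℝ[X]) ≠ 0), hlead,
      hdeg]
    simp [leadingCoeff_neg]
    norm_num
  have hbot : Tendsto (fun x => Pn.eval x) atTop atBot :=
    Pn.tendsto_atBot_of_leadingCoeff_nonpos hPnDegpos (by rw [hPnlead]; exact hc4neg.le)
  have hPnEval : ∀ x : ℝ, Pn.eval x = f (-x) := by
    intro x; rw [hPn, eval_comp]; simp [hf]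
  -- find a point far left with f < 0
  obtain ⟨M₁, hM₁⟩ := ((hbot.eventually (eventually_lt_atBot 0)).and
    (eventually_gt_atTop beta)).exists
  have hlo : f (-M₁) < 0 := by rw [← hPnEval]; exact hM₁.1
  have hloLt : -M₁ < -beta := by linarith [hM₁.2]
  -- find a point far right with f < 0
  obtain ⟨M₂, hM₂⟩ := ((htop.eventually (eventually_lt_atBot 0)).and
    (eventually_gt_atTop alpha)).exists
  have hhi : f M₂ < 0 := hM₂.1
  have hhiGt : alpha < M₂ := hM₂.2
  have hcontOn : ∀ s : Set ℝ, ContinuousOn f s := fun s => hcont.continuousOn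
  -- four roots via IVT
  obtain ⟨ρ₁, hρ₁mem, hρ₁⟩ := intermediate_value_Ioo hloLt.le (hcontOn _)
    (Set.mem_Ioo.mpr ⟨hlo, fnegbeta_pos⟩)
  obtain ⟨ρ₂, hρ₂mem, hρ₂⟩ := intermediate_value_Ioo' (by linarith : -beta ≤ (0:ℝ)) (hcontOn _)
    (Set.mem_Ioo.mpr ⟨f0_neg, fnegbeta_pos⟩)
  obtain ⟨ρ₃, hρ₃mem, hρ₃⟩ := intermediate_value_Ioo (by linarith : (0:ℝ) ≤ alpha) (hcontOn _)
    (Set.mem_Ioo.mpr ⟨f0_neg, falpha_pos⟩)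
  obtain ⟨ρ₄, hρ₄mem, hρ₄⟩ := intermediate_value_Ioo' hhiGt.le (hcontOn _)
    (Set.mem_Ioo.mpr ⟨hhi, falpha_pos⟩)
  obtain ⟨h1a, h1b⟩ := hρ₁mem
  obtain ⟨h2a, h2b⟩ := hρ₂mem
  obtain ⟨h3a, h3b⟩ := hρ₃mem
  obtain ⟨h4a, h4b⟩ := hρ₄mem
  -- equivalence psi z = r ↔ f z = 0 off the poles
  have hequiv : ∀ z : ℝ, z ≠ alpha → z ≠ -beta → (psi z = r ↔ f z = 0) := by
    intro z hza hzb
    have hαz : alpha - z ≠ 0 := fun h => hza (by linarith [sub_eq_zero.mp h])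
    have hβz : beta + z ≠ 0 := fun h => hzb (by linarith)
    have key : f z = (a * z + (1/2) * b^2 * z^2 + lam * z / (alpha - z)
        - mu * z / (beta + z) - r) * ((alpha - z) * (beta + z)) := by
      rw [feval]; field_simp; ring
    rw [hpsi z hza hzb]
    constructor
    · intro h; rw [key, h]; ring
    · intro h
      rw [key] at h
      rcases mul_eq_zero.mp h with h' | h'
      · linarith [sub_eq_zero.mp h']
      · exact absurd h' (mul_ne_zero hαz hβz)
  refine ⟨ρ₁, ρ₂, ρ₃, ρ₄, h1b, h2a, h2b, h3a, h3b, h4a, ?_⟩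
  intro z hza hzb
  rw [hequiv z hza hzb]
  constructor
  · intro hz
    by_contra hne
    push_neg at hne
    obtain ⟨ne1, ne2, ne3, ne4⟩ := hne
    -- five distinct roots of a degree-4 polynomial: contradiction
    have hd : ({z, ρ₁, ρ₂, ρ₃, ρ₄} : Finset ℝ).card ≤ P.natDegree := by
      apply Polynomial.card_le_degree_of_subset_roots
      intro x hx
      have hx' : x = z ∨ x = ρ₁ ∨ x = ρ₂ ∨ x = ρ₃ ∨ x = ρ₄ := by
        simpa using hx
      rw [mem_roots hP0]
      rcases hx' with rfl | rfl | rfl | rfl | rfl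
      · exact hz
      · exact hρ₁
      · exact hρ₂
      · exact hρ₃
      · exact hρ₄
    have hcard : ({z, ρ₁, ρ₂, ρ₃, ρ₄} : Finset ℝ).card = 5 := by
      have d12 : ρ₁ ≠ ρ₂ := by intro h; rw [h] at h1b; linarith
      have d13 : ρ₁ ≠ ρ₃ := by intro h; rw [h] at h1b; linarith
      have d14 : ρ₁ ≠ ρ₄ := by intro h; rw [h] at h1b; linarith
      have d23 : ρ₂ ≠ ρ₃ := by intro h; rw [h] at h2b; linarith
      have d24 : ρ₂ ≠ ρ₄ := by intro h; rw [h] at h2b; linarith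
      have d34 : ρ₃ ≠ ρ₄ := by intro h; rw [h] at h3b; linarith
      rw [Finset.card_insert_of_notMem (by simp [ne1, ne2, ne3, ne4]),
        Finset.card_insert_of_notMem (by simp [d12, d13, d14]),
        Finset.card_insert_of_notMem (by simp [d23, d24]),
        Finset.card_insert_of_notMem (by simp [d34])]
      simp
    rw [hcard, hdeg] at hd
    norm_num at hd
  · rintro (rfl | rfl | rfl | rfl)
    · exact hρ₁
    · exact hρ₂
    · exact hρ₃
    · exact hρ₄
end

section
/- Let a, b, λ, μ, α, β, r be real numbers with b > 0, λ > 0, μ > 0, α > 0, β > 0, r > 0, and let ψ(z) = a z + (1/2) b² z² + λ z/(α − z) − μ z/(β + z). If ρ₁ < −β < ρ₂ < 0 < ρ₃ < α < ρ₄ are the four real roots of ψ(z) = r, then ψ'(ρ₁) < 0, ψ'(ρ₂) < 0, ψ'(ρ₃) > 0 and ψ'(ρ₄) > 0. -/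
/-!
Clearing denominators, `ψ z = r` becomes `N z = 0` for the quartic
`N z = (ψ z - r)(α - z)(β + z)` with leading coefficient `-b² / 2`. Having the four distinct
roots `ρᵢ`, it factors as `N z = -(b² / 2) ∏ (z - ρᵢ)`. Differentiating both expressions of `N`
at a root `ρᵢ`, where `ψ ρᵢ - r` vanishes, gives
`ψ'(ρᵢ) (α - ρᵢ)(β + ρᵢ) = -(b² / 2) ∏_{j ≠ i} (ρᵢ - ρⱼ)`,
and the ordering of the roots fixes the signs of every factor.
-/

open Filter Topology

theorem cubic_coeffs_eq_zero_of_four_roots {R : Type*} [CommRing R] [IsDomain R]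
    {e₃ e₂ e₁ e₀ x₁ x₂ x₃ x₄ : R}
    (h₁₂ : x₁ ≠ x₂) (h₁₃ : x₁ ≠ x₃) (h₁₄ : x₁ ≠ x₄) (h₂₃ : x₂ ≠ x₃) (h₂₄ : x₂ ≠ x₄) (h₃₄ : x₃ ≠ x₄)
    (H₁ : e₃ * x₁ ^ 3 + e₂ * x₁ ^ 2 + e₁ * x₁ + e₀ = 0)
    (H₂ : e₃ * x₂ ^ 3 + e₂ * x₂ ^ 2 + e₁ * x₂ + e₀ = 0)
    (H₃ : e₃ * x₃ ^ 3 + e₂ * x₃ ^ 2 + e₁ * x₃ + e₀ = 0)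
    (H₄ : e₃ * x₄ ^ 3 + e₂ * x₄ ^ 2 + e₁ * x₄ + e₀ = 0) :
    e₃ = 0 ∧ e₂ = 0 ∧ e₁ = 0 ∧ e₀ = 0 := by
  -- successive divided differences
  have G₂ : e₃ * (x₁ ^ 2 + x₁ * x₂ + x₂ ^ 2) + e₂ * (x₁ + x₂) + e₁ = 0 :=
    mul_left_cancel₀ (sub_ne_zero.mpr h₁₂) (by linear_combination H₁ - H₂)
  have G₃ : e₃ * (x₁ ^ 2 + x₁ * x₃ + x₃ ^ 2) + e₂ * (x₁ + x₃) + e₁ = 0 :=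
    mul_left_cancel₀ (sub_ne_zero.mpr h₁₃) (by linear_combination H₁ - H₃)
  have G₄ : e₃ * (x₁ ^ 2 + x₁ * x₄ + x₄ ^ 2) + e₂ * (x₁ + x₄) + e₁ = 0 :=
    mul_left_cancel₀ (sub_ne_zero.mpr h₁₄) (by linear_combination H₁ - H₄)
  have K₃ : e₃ * (x₁ + x₂ + x₃) + e₂ = 0 :=
    mul_left_cancel₀ (sub_ne_zero.mpr h₂₃) (by linear_combination G₂ - G₃)
  have K₄ : e₃ * (x₁ + x₂ + x₄) + e₂ = 0 :=
    mul_left_cancel₀ (sub_ne_zero.mpr h₂₄) (by linear_combination G₂ - G₄)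
  have he₃ : e₃ = 0 := mul_left_cancel₀ (sub_ne_zero.mpr h₃₄) (by linear_combination K₃ - K₄)
  have he₂ : e₂ = 0 := by linear_combination K₃ - (x₁ + x₂ + x₃) * he₃
  have he₁ : e₁ = 0 := by
    linear_combination G₂ - (x₁ ^ 2 + x₁ * x₂ + x₂ ^ 2) * he₃ - (x₁ + x₂) * he₂
  exact ⟨he₃, he₂, he₁, by linear_combination H₁ - x₁ ^ 3 * he₃ - x₁ ^ 2 * he₂ - x₁ * he₁⟩

theorem quartic_eq_prod_of_four_roots {R : Type*} [CommRing R] [IsDomain R] {p : R → R}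
    {c e₃ e₂ e₁ e₀ x₁ x₂ x₃ x₄ : R}
    (hp : ∀ z, p z = c * z ^ 4 + e₃ * z ^ 3 + e₂ * z ^ 2 + e₁ * z + e₀)
    (h₁₂ : x₁ ≠ x₂) (h₁₃ : x₁ ≠ x₃) (h₁₄ : x₁ ≠ x₄) (h₂₃ : x₂ ≠ x₃) (h₂₄ : x₂ ≠ x₄) (h₃₄ : x₃ ≠ x₄)
    (H₁ : p x₁ = 0) (H₂ : p x₂ = 0) (H₃ : p x₃ = 0) (H₄ : p x₄ = 0) (z : R) :
    p z = c * ((z - x₁) * (z - x₂) * (z - x₃) * (z - x₄)) := by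
  -- `p` minus the product is a cubic vanishing at the four roots
  obtain ⟨d₃, d₂, d₁, d₀⟩ := cubic_coeffs_eq_zero_of_four_roots
    (e₃ := e₃ + c * (x₁ + x₂ + x₃ + x₄))
    (e₂ := e₂ - c * (x₁ * x₂ + x₁ * x₃ + x₁ * x₄ + x₂ * x₃ + x₂ * x₄ + x₃ * x₄))
    (e₁ := e₁ + c * (x₁ * x₂ * x₃ + x₁ * x₂ * x₄ + x₁ * x₃ * x₄ + x₂ * x₃ * x₄))
    (e₀ := e₀ - c * (x₁ * x₂ * x₃ * x₄)) h₁₂ h₁₃ h₁₄ h₂₃ h₂₄ h₃₄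
    (by linear_combination H₁ - hp x₁) (by linear_combination H₂ - hp x₂)
    (by linear_combination H₃ - hp x₃) (by linear_combination H₄ - hp x₄)
  linear_combination hp z + z ^ 3 * d₃ + z ^ 2 * d₂ + z * d₁ + d₀

theorem HasDerivAt.mul_of_eq_zero {𝕜 𝔸 : Type*} [NontriviallyNormedField 𝕜] [NormedRing 𝔸]
    [NormedAlgebra 𝕜 𝔸] {f g : 𝕜 → 𝔸} {f' : 𝔸} {x : 𝕜} (hf : HasDerivAt f f' x)
    (hg : DifferentiableAt 𝕜 g x) (hfx : f x = 0) :
    HasDerivAt (fun z => f z * g z) (f' * g x) x := by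
  simpa [hfx] using hf.fun_mul hg.hasDerivAt

noncomputable def psiNumerator (a b lam mu alpha beta r z : ℝ) : ℝ :=
  (a * z + (1/2) * b^2 * z^2 - r) * ((alpha - z) * (beta + z))
    + lam * z * (beta + z) - mu * z * (alpha - z)

theorem psiNumerator_eq_quartic (a b lam mu alpha beta r z : ℝ) :
    psiNumerator a b lam mu alpha beta r z =
      -(1/2) * b^2 * z^4 + (-a + (1/2) * b^2 * (alpha - beta)) * z^3
        + (a * (alpha - beta) + (1/2) * b^2 * alpha * beta + r + lam + mu) * z^2
        + (a * alpha * beta - r * (alpha - beta) + lam * beta - mu * alpha) * z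
        + -r * alpha * beta := by
  unfold psiNumerator
  ring

section

variable {a b lam mu alpha beta r : ℝ} {psi : ℝ → ℝ} {ρ : ℝ}

theorem psiNumerator_eq_mul
    (hpsi : ∀ z : ℝ, z ≠ alpha → z ≠ -beta →
      psi z = a * z + (1/2) * b^2 * z^2 + lam * z / (alpha - z) - mu * z / (beta + z))
    {z : ℝ} (hz : (alpha - z) * (beta + z) ≠ 0) :
    psiNumerator a b lam mu alpha beta r z = (psi z - r) * ((alpha - z) * (beta + z)) := by
  obtain ⟨hα, hβ⟩ := mul_ne_zero_iff.mp hz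
  rw [hpsi z (by rintro rfl; simp at hα) (by rintro rfl; simp at hβ), psiNumerator]
  field_simp
  ring

theorem psiNumerator_eq_zero
    (hpsi : ∀ z : ℝ, z ≠ alpha → z ≠ -beta →
      psi z = a * z + (1/2) * b^2 * z^2 + lam * z / (alpha - z) - mu * z / (beta + z))
    (hρ : (alpha - ρ) * (beta + ρ) ≠ 0) (hroot : psi ρ = r) :
    psiNumerator a b lam mu alpha beta r ρ = 0 := by
  rw [psiNumerator_eq_mul hpsi hρ, hroot, sub_self, zero_mul]

theorem deriv_eq_div_of_psiNumerator_eq_mul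
    (hpsi : ∀ z : ℝ, z ≠ alpha → z ≠ -beta →
      psi z = a * z + (1/2) * b^2 * z^2 + lam * z / (alpha - z) - mu * z / (beta + z))
    (hρ : (alpha - ρ) * (beta + ρ) ≠ 0) (hroot : psi ρ = r) {g : ℝ → ℝ}
    (hg : DifferentiableAt ℝ g ρ)
    (hfac : ∀ z, psiNumerator a b lam mu alpha beta r z = (z - ρ) * g z) :
    deriv psi ρ = g ρ / ((alpha - ρ) * (beta + ρ)) := by
  have hden : ∀ᶠ z in 𝓝 ρ, (alpha - z) * (beta + z) ≠ 0 :=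
    (continuous_const.sub continuous_id).mul (continuous_const.add continuous_id)
      |>.continuousAt.eventually_ne hρ
  have hpsi_diff : DifferentiableAt ℝ psi ρ := by
    have hquot : DifferentiableAt ℝ
        (fun z => r + psiNumerator a b lam mu alpha beta r z / ((alpha - z) * (beta + z))) ρ := by
      unfold psiNumerator
      fun_prop (disch := assumption)
    refine hquot.congr_of_eventuallyEq ?_
    filter_upwards [hden] with z hz
    rw [psiNumerator_eq_mul hpsi hz, mul_div_cancel_right₀ _ hz, add_sub_cancel]
  have hlhs : HasDerivAt (psiNumerator a b lam mu alpha beta r)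
      (deriv psi ρ * ((alpha - ρ) * (beta + ρ))) ρ := by
    refine ((hpsi_diff.hasDerivAt.sub_const r).mul_of_eq_zero
      (g := fun z => (alpha - z) * (beta + z)) (by fun_prop)
      (sub_eq_zero.mpr hroot)).congr_of_eventuallyEq ?_
    filter_upwards [hden] with z hz
    exact psiNumerator_eq_mul hpsi hz
  have hrhs : HasDerivAt (psiNumerator a b lam mu alpha beta r) (1 * g ρ) ρ :=
    (funext hfac ▸ ((hasDerivAt_id ρ).sub_const ρ).mul_of_eq_zero hg (sub_self ρ))
  exact eq_div_of_mul_eq hρ (hlhs.unique hrhs |>.trans (one_mul _))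

end

theorem deriv_signs_at_roots_general
    (a b lam mu alpha beta r : ℝ)
    (hb : 0 < b)
    (psi : ℝ → ℝ)
    (hpsi : ∀ z : ℝ, z ≠ alpha → z ≠ -beta →
      psi z = a * z + (1/2) * b^2 * z^2 + lam * z / (alpha - z) - mu * z / (beta + z))
    (ρ₁ ρ₂ ρ₃ ρ₄ : ℝ)
    (hord : ρ₁ < -beta ∧ -beta < ρ₂ ∧ ρ₂ < 0 ∧ 0 < ρ₃ ∧ ρ₃ < alpha ∧ alpha < ρ₄)
    (hroot₁ : psi ρ₁ = r) (hroot₂ : psi ρ₂ = r)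
    (hroot₃ : psi ρ₃ = r) (hroot₄ : psi ρ₄ = r) :
    deriv psi ρ₁ < 0 ∧ deriv psi ρ₂ < 0 ∧ 0 < deriv psi ρ₃ ∧ 0 < deriv psi ρ₄ := by
  obtain ⟨h₁β, hβ₂, h₂0, h0₃, h₃α, hα₄⟩ := hord
  have hq₁ : (alpha - ρ₁) * (beta + ρ₁) < 0 := mul_neg_of_pos_of_neg (by linarith) (by linarith)
  have hq₂ : 0 < (alpha - ρ₂) * (beta + ρ₂) := mul_pos (by linarith) (by linarith)
  have hq₃ : 0 < (alpha - ρ₃) * (beta + ρ₃) := mul_pos (by linarith) (by linarith)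
  have hq₄ : (alpha - ρ₄) * (beta + ρ₄) < 0 := mul_neg_of_neg_of_pos (by linarith) (by linarith)
  have hfac := quartic_eq_prod_of_four_roots (psiNumerator_eq_quartic a b lam mu alpha beta r)
    (by linarith : ρ₁ < ρ₂).ne (by linarith : ρ₁ < ρ₃).ne (by linarith : ρ₁ < ρ₄).ne
    (by linarith : ρ₂ < ρ₃).ne (by linarith : ρ₂ < ρ₄).ne (by linarith : ρ₃ < ρ₄).ne
    (psiNumerator_eq_zero hpsi hq₁.ne hroot₁) (psiNumerator_eq_zero hpsi hq₂.ne' hroot₂)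
    (psiNumerator_eq_zero hpsi hq₃.ne' hroot₃) (psiNumerator_eq_zero hpsi hq₄.ne hroot₄)
  have hcofactor_pos : ∀ {x y w : ℝ}, 0 < x → 0 < y → 0 < w → 0 < (1/2) * b^2 * (x * y * w) :=
    fun hx hy hw => by positivity
  -- each `g` is the cofactor of `z - ρᵢ` in `hfac`, written as `±(b² / 2)` times positive factors
  refine ⟨?_, ?_, ?_, ?_⟩
  · rw [deriv_eq_div_of_psiNumerator_eq_mul hpsi hq₁.ne hroot₁
      (g := fun z => (1/2) * b^2 * ((ρ₂ - z) * (ρ₃ - z) * (ρ₄ - z))) (by fun_prop)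
      (fun z => by rw [hfac]; ring)]
    exact div_neg_of_pos_of_neg (hcofactor_pos (by linarith) (by linarith) (by linarith)) hq₁
  · rw [deriv_eq_div_of_psiNumerator_eq_mul hpsi hq₂.ne' hroot₂
      (g := fun z => -((1/2) * b^2 * ((z - ρ₁) * (ρ₃ - z) * (ρ₄ - z)))) (by fun_prop)
      (fun z => by rw [hfac]; ring)]
    exact div_neg_of_neg_of_pos
      (neg_neg_of_pos (hcofactor_pos (by linarith) (by linarith) (by linarith))) hq₂
  · rw [deriv_eq_div_of_psiNumerator_eq_mul hpsi hq₃.ne' hroot₃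
      (g := fun z => (1/2) * b^2 * ((z - ρ₁) * (z - ρ₂) * (ρ₄ - z))) (by fun_prop)
      (fun z => by rw [hfac]; ring)]
    exact div_pos (hcofactor_pos (by linarith) (by linarith) (by linarith)) hq₃
  · rw [deriv_eq_div_of_psiNumerator_eq_mul hpsi hq₄.ne hroot₄
      (g := fun z => -((1/2) * b^2 * ((z - ρ₁) * (z - ρ₂) * (z - ρ₃)))) (by fun_prop)
      (fun z => by rw [hfac]; ring)]
    exact div_pos_of_neg_of_neg
      (neg_neg_of_pos (hcofactor_pos (by linarith) (by linarith) (by linarith))) hq₄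

theorem deriv_signs_at_roots
    (a b lam mu alpha beta r : ℝ)
    (hb : 0 < b) (hlam : 0 < lam) (hmu : 0 < mu)
    (halpha : 0 < alpha) (hbeta : 0 < beta) (hr : 0 < r)
    (psi : ℝ → ℝ)
    (hpsi : ∀ z : ℝ, z ≠ alpha → z ≠ -beta →
      psi z = a * z + (1/2) * b^2 * z^2 + lam * z / (alpha - z) - mu * z / (beta + z))
    (ρ₁ ρ₂ ρ₃ ρ₄ : ℝ)
    (hord : ρ₁ < -beta ∧ -beta < ρ₂ ∧ ρ₂ < 0 ∧ 0 < ρ₃ ∧ ρ₃ < alpha ∧ alpha < ρ₄)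
    (hroot₁ : psi ρ₁ = r) (hroot₂ : psi ρ₂ = r)
    (hroot₃ : psi ρ₃ = r) (hroot₄ : psi ρ₄ = r) :
    deriv psi ρ₁ < 0 ∧ deriv psi ρ₂ < 0 ∧ 0 < deriv psi ρ₃ ∧ 0 < deriv psi ρ₄ :=
  deriv_signs_at_roots_general a b lam mu alpha beta r hb psi hpsi ρ₁ ρ₂ ρ₃ ρ₄ hord hroot₁ hroot₂
    hroot₃ hroot₄
end

section
/- Let a < 0, λ > 0, α > 0, r ≥ 0 and define ψ(z) = a z + λ z/(α − z) for z ≠ α. Suppose ρ₁ ≤ 0 < ρ₂ are the two real roots of ψ(z) = r (with ρ₁ < 0 when r > 0, and ρ₁ = 0 when r = 0 and ψ'(0) < 0), and ψ'(ρ₁) ≠ 0, ψ'(ρ₂) ≠ 0. Then 1/ψ'(ρ₁) + 1/ψ'(ρ₂) = 1/a, and consequently −ψ'(ρ₁) < ψ'(ρ₂). -/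
/-!
Clearing the denominator turns `ψ z = r` into a quadratic equation in `z` whose value at `α` is
`λ α ≠ 0`, so its two roots `ρ₁, ρ₂` satisfy `a (α - ρ₁) (α - ρ₂) = -λ α`. (The second root is
`ρ₂` and not `α` because `ψ'(ρ₁) ≠ 0` rules out a double root at `ρ₁`.) With `u = α - ρ₁`,
`v = α - ρ₂` this gives `ψ'(ρ₁) = a + λ α / u² = a (u - v) / u` and `ψ'(ρ₂) = a (v - u) / v`,
whose reciprocals add up to `1 / a`, while their sum `-a (u - v)² / (u v)` is positive.
-/

section Quadratic

variable {a lam alpha r : ℝ}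

theorem deriv_eq_add_div_sq {psi : ℝ → ℝ}
    (hpsi : ∀ z : ℝ, z ≠ alpha → psi z = a * z + lam * z / (alpha - z))
    {x : ℝ} (hx : x ≠ alpha) :
    deriv psi x = a + lam * alpha / (alpha - x) ^ 2 := by
  have hne : alpha - x ≠ 0 := sub_ne_zero.mpr hx.symm
  have hev : psi =ᶠ[nhds x] fun z => a * z + lam * z / (alpha - z) :=
    Filter.eventually_of_mem (isOpen_compl_singleton.mem_nhds hx) hpsi
  have hderiv : HasDerivAt (fun z => a * z + lam * z / (alpha - z))
      (a * 1 + (lam * 1 * (alpha - x) - lam * x * (0 - 1)) / (alpha - x) ^ 2) x :=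
    ((hasDerivAt_id x).const_mul a).add
      (((hasDerivAt_id x).const_mul lam).div ((hasDerivAt_const x alpha).sub (hasDerivAt_id x)) hne)
  rw [hev.deriv_eq, hderiv.deriv]
  field_simp
  ring

theorem eq_iff_quadratic_eq {psi : ℝ → ℝ}
    (hpsi : ∀ z : ℝ, z ≠ alpha → psi z = a * z + lam * z / (alpha - z))
    {z : ℝ} (hz : z ≠ alpha) :
    psi z = r ↔ a * z * (alpha - z) + lam * z = r * (alpha - z) := by
  have hne : alpha - z ≠ 0 := sub_ne_zero.mpr hz.symm
  rw [hpsi z hz, ← div_eq_iff hne, add_div, mul_div_cancel_right₀ _ hne]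

/-- The other root is `(a α + λ + r) / a - x`, by Vieta's formula for the sum of the roots. -/
theorem exists_conjugate_root (ha : a ≠ 0) {x : ℝ}
    (hx : a * x * (alpha - x) + lam * x = r * (alpha - x)) :
    ∃ y, a * y * (alpha - y) + lam * y = r * (alpha - y) ∧
      a * (alpha - x) * (alpha - y) = -(lam * alpha) := by
  refine ⟨(a * alpha + lam + r) / a - x, ?_, ?_⟩
  · field_simp
    linear_combination a * hx
  · field_simp
    linear_combination hx

theorem add_div_sq_eq_mul_sub_div {c u v : ℝ} (h : a * u * v = -c) (hu : u ≠ 0) :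
    a + c / u ^ 2 = a * (u - v) / u := by
  obtain rfl : c = -(a * u * v) := by linarith
  field_simp
  ring

theorem one_div_add_div_sq_add_one_div_add_div_sq {c u v : ℝ} (ha : a ≠ 0) (h : a * u * v = -c)
    (hu : u ≠ 0) (hv : v ≠ 0) (huv : u ≠ v) :
    1 / (a + c / u ^ 2) + 1 / (a + c / v ^ 2) = 1 / a := by
  have hvu : v - u ≠ 0 := sub_ne_zero.mpr huv.symm
  rw [add_div_sq_eq_mul_sub_div h hu,
    add_div_sq_eq_mul_sub_div ((mul_right_comm a v u).trans h) hv]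
  field_simp
  ring

theorem add_div_sq_add_add_div_sq_pos {c u v : ℝ} (ha : a < 0) (h : a * u * v = -c)
    (hu : 0 < u) (hv : 0 < v) (huv : u ≠ v) :
    0 < (a + c / u ^ 2) + (a + c / v ^ 2) := by
  have hsum : (a + c / u ^ 2) + (a + c / v ^ 2) = -a * (u - v) ^ 2 / (u * v) := by
    rw [add_div_sq_eq_mul_sub_div h hu.ne',
      add_div_sq_eq_mul_sub_div ((mul_right_comm a v u).trans h) hv.ne']
    field_simp
    ring
  rw [hsum]
  have : u - v ≠ 0 := sub_ne_zero.mpr huv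
  exact div_pos (mul_pos (neg_pos.2 ha) (by positivity)) (mul_pos hu hv)

end Quadratic

theorem sum_inverse_derivs_eq_inv_drift_general
    (a lam alpha r : ℝ)
    (ha : a < 0) (hlam : 0 < lam) (halpha : 0 < alpha)
    (psi : ℝ → ℝ)
    (hpsi : ∀ z : ℝ, z ≠ alpha → psi z = a * z + lam * z / (alpha - z))
    (ρ₁ ρ₂ : ℝ)
    (hρ₁ : ρ₁ ≤ 0) (hρ₂ : 0 < ρ₂)
    (hroots : ∀ z : ℝ, z ≠ alpha → (psi z = r ↔ z = ρ₁ ∨ z = ρ₂))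
    (hd₁ : deriv psi ρ₁ ≠ 0) :
    1 / deriv psi ρ₁ + 1 / deriv psi ρ₂ = 1 / a ∧
    -deriv psi ρ₁ < deriv psi ρ₂ := by
  have hρ₁α : ρ₁ ≠ alpha := by linarith
  have hu : 0 < alpha - ρ₁ := by linarith
  have hroot₁ := (eq_iff_quadratic_eq hpsi hρ₁α).1 ((hroots ρ₁ hρ₁α).2 (Or.inl rfl))
  obtain ⟨y, hy, hprod⟩ := exists_conjugate_root ha.ne hroot₁
  have hyα : y ≠ alpha := by
    rintro rfl
    simp only [sub_self, mul_zero, zero_eq_neg] at hprod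
    exact (mul_pos hlam halpha).ne' hprod
  obtain rfl : y = ρ₂ := by
    rcases (hroots y hyα).1 ((eq_iff_quadratic_eq hpsi hyα).2 hy) with rfl | h
    · refine absurd ?_ hd₁
      rw [deriv_eq_add_div_sq hpsi hρ₁α, add_div_sq_eq_mul_sub_div hprod hu.ne', sub_self]
      simp
    · exact h
  have hv : 0 < alpha - y := pos_of_mul_neg_right (by linarith [mul_pos hlam halpha])
    (mul_neg_of_neg_of_pos ha hu).le
  have huv : alpha - ρ₁ ≠ alpha - y := by linarith
  rw [deriv_eq_add_div_sq hpsi hρ₁α, deriv_eq_add_div_sq hpsi hyα]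
  exact ⟨one_div_add_div_sq_add_one_div_add_div_sq ha.ne hprod hu.ne' hv.ne' huv,
    neg_lt_iff_pos_add'.2 (add_div_sq_add_add_div_sq_pos ha hprod hu hv huv)⟩

theorem sum_inverse_derivs_eq_inv_drift
    (a lam alpha r : ℝ)
    (ha : a < 0) (hlam : 0 < lam) (halpha : 0 < alpha) (hr : 0 ≤ r)
    (psi : ℝ → ℝ)
    (hpsi : ∀ z : ℝ, z ≠ alpha → psi z = a * z + lam * z / (alpha - z))
    (ρ₁ ρ₂ : ℝ)
    (hρ₁ : ρ₁ ≤ 0) (hρ₂ : 0 < ρ₂)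
    (hroots : ∀ z : ℝ, z ≠ alpha → (psi z = r ↔ z = ρ₁ ∨ z = ρ₂))
    (hcase_pos : 0 < r → ρ₁ < 0)
    (hcase_zero : r = 0 → ρ₁ = 0 ∧ deriv psi 0 < 0)
    (hd₁ : deriv psi ρ₁ ≠ 0) (hd₂ : deriv psi ρ₂ ≠ 0) :
    1 / deriv psi ρ₁ + 1 / deriv psi ρ₂ = 1 / a ∧
    -deriv psi ρ₁ < deriv psi ρ₂ :=
  sum_inverse_derivs_eq_inv_drift_general a lam alpha r ha hlam halpha psi hpsi ρ₁ ρ₂ hρ₁ hρ₂ hroots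
    hd₁
end

section
/- Let a < 0, λ > 0, α > 0 with λ/((−a)α) < 1, and F(x, u) = (λ/(−a)) ∫₀^∞ e^{−α y} (1 + y/x)^u dy for x > 0. Then for each u ≥ 1 there is a unique x = φ(u) ∈ (0, ∞) with F(φ(u), u) = 1, and the resulting function φ : [1, ∞) → (0, ∞) is strictly increasing. -/
/-!
For fixed `u > 0` the integral `K(x) = ∫₀^∞ e^{-αy} (1 + y/x)^u dy` is continuous and strictly
decreasing in `x > 0`, and strictly increasing in `u`. For `u ≥ 1` it is squeezed between
`K` at `u = 1`, which equals `1/α + 1/(xα²)`, and `1/(α - u/x)` (from `1 + t ≤ eᵗ`), so it takes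
every value above `1/α`; since `F = (λ/(-a)) K` and `λ/(-a) < α`, the value `1` of `F` is taken
exactly once. If `u < v` then `K(φ(v), v) = K(φ(u), u) < K(φ(u), v)`, so `φ(u) < φ(v)`.
-/

open MeasureTheory Set Real Filter Asymptotics

theorem setIntegral_lt_setIntegral_of_forall_lt {X : Type*} [MeasurableSpace X] {μ : Measure X}
    {s : Set X} {f g : X → ℝ} (hs : MeasurableSet s) (hμs : μ s ≠ 0)
    (hf : IntegrableOn f s μ) (hg : IntegrableOn g s μ) (h : ∀ x ∈ s, f x < g x) :
    ∫ x in s, f x ∂μ < ∫ x in s, g x ∂μ := by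
  rw [← sub_pos, ← integral_sub hg hf]
  refine (setIntegral_pos_iff_support_of_nonneg_ae ?_ (hg.sub hf)).2 ?_
  · filter_upwards [ae_restrict_mem hs] with x hx using sub_nonneg.2 (h x hx).le
  · have : Function.support (g - f) ∩ s = s :=
      inter_eq_right.2 fun x hx => (sub_pos.2 (h x hx)).ne'
    rwa [this, pos_iff_ne_zero]

noncomputable def expPowIntegral (α x u : ℝ) : ℝ :=
  ∫ y in Ioi (0:ℝ), exp (-α * y) * (1 + y / x) ^ u

section expPowIntegral

variable {α x u : ℝ}

theorem integrableOn_exp_mul_one_add_div_rpow (hα : 0 < α) (hx : 0 < x) (u : ℝ) :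
    IntegrableOn (fun y => exp (-α * y) * (1 + y / x) ^ u) (Ioi 0) := by
  refine integrable_of_isBigO_exp_neg (half_pos hα) ?_ ?_
  · refine ContinuousOn.mul (by fun_prop) (ContinuousOn.rpow_const (by fun_prop) fun y hy => ?_)
    exact Or.inl (by have : (0:ℝ) ≤ y := hy; positivity)
  · have hlin : Tendsto (fun y => 1 + y / x) atTop atTop :=
      tendsto_atTop_add_const_left _ _ (tendsto_id.atTop_div_const hx)
    -- polynomial growth of `(1 + y / x) ^ u` is beaten by `exp (α y / 2)`
    have hpow := ((isLittleO_rpow_exp_pos_mul_atTop u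
      (by positivity : 0 < α * x / 2)).comp_tendsto hlin).isBigO
    refine ((isBigO_refl (fun y => exp (-α * y)) atTop).mul hpow).trans ?_
    refine (EventuallyEq.isBigO (Eventually.of_forall fun y => ?_)).trans
      (isBigO_const_mul_self (exp (α * x / 2)) _ atTop)
    simp only [Function.comp_apply, ← exp_add]
    congr 1
    field_simp
    ring

theorem expPowIntegral_strictAntiOn (hα : 0 < α) (hu : 0 < u) :
    StrictAntiOn (fun x => expPowIntegral α x u) (Ioi 0) := by
  intro x₁ (hx₁ : 0 < x₁) x₂ (hx₂ : 0 < x₂) hlt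
  refine setIntegral_lt_setIntegral_of_forall_lt measurableSet_Ioi (by simp)
    (integrableOn_exp_mul_one_add_div_rpow hα hx₂ u)
    (integrableOn_exp_mul_one_add_div_rpow hα hx₁ u) fun y (hy : 0 < y) => ?_
  gcongr

theorem expPowIntegral_strictMono (hα : 0 < α) (hx : 0 < x) :
    StrictMono (fun u => expPowIntegral α x u) := by
  intro u v huv
  refine setIntegral_lt_setIntegral_of_forall_lt measurableSet_Ioi (by simp)
    (integrableOn_exp_mul_one_add_div_rpow hα hx u)
    (integrableOn_exp_mul_one_add_div_rpow hα hx v) fun y (hy : 0 < y) => ?_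
  have hyx : 0 < y / x := by positivity
  exact mul_lt_mul_of_pos_left (rpow_lt_rpow_of_exponent_lt (by linarith) huv) (exp_pos _)

theorem continuousOn_expPowIntegral (hα : 0 < α) (hu : 0 ≤ u) :
    ContinuousOn (fun x => expPowIntegral α x u) (Ioi 0) := by
  intro x₀ (hx₀ : 0 < x₀)
  refine ContinuousAt.continuousWithinAt (continuousAt_of_dominated
    (bound := fun y => exp (-α * y) * (1 + y / (x₀ / 2)) ^ u) ?_ ?_
    (integrableOn_exp_mul_one_add_div_rpow hα (half_pos hx₀) u) ?_)
  · exact Eventually.of_forall fun x => by fun_prop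
  · filter_upwards [Ioi_mem_nhds (half_lt_self hx₀)] with x (hx : x₀ / 2 < x)
    filter_upwards [ae_restrict_mem measurableSet_Ioi] with y (hy : 0 < y)
    have hx' : 0 < x := (half_pos hx₀).trans hx
    rw [norm_of_nonneg (by positivity)]
    gcongr
  · filter_upwards [ae_restrict_mem measurableSet_Ioi] with y hy
    exact continuousAt_const.mul ((continuousAt_const.add
      (continuousAt_const.div continuousAt_id hx₀.ne')).rpow_const (Or.inr hu))

theorem expPowIntegral_one (hα : 0 < α) (x : ℝ) :
    expPowIntegral α x 1 = 1 / α + 1 / (x * α ^ 2) := by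
  have h₀ := integral_rpow_mul_exp_neg_mul_Ioi one_pos hα
  have h₁ := integral_rpow_mul_exp_neg_mul_Ioi two_pos hα
  norm_num at h₀ h₁
  have hi₀ := Integrable.of_integral_ne_zero (h₀.trans_ne (inv_ne_zero hα.ne'))
  have hi₁ := Integrable.of_integral_ne_zero (h₁.trans_ne (by positivity))
  calc expPowIntegral α x 1
      = ∫ y in Ioi (0:ℝ), (exp (-(α * y)) + x⁻¹ * (y * exp (-(α * y)))) := by
        refine setIntegral_congr_fun measurableSet_Ioi fun y _ => ?_
        rw [rpow_one, neg_mul]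
        ring
    _ = 1 / α + 1 / (x * α ^ 2) := by
        rw [integral_add hi₀ (hi₁.const_mul _), integral_const_mul, h₀, h₁]
        field_simp

theorem expPowIntegral_le (hx : 0 < x) (hu : 0 ≤ u) (h : u / x < α) :
    expPowIntegral α x u ≤ 1 / (α - u / x) := by
  have hb : 0 < α - u / x := sub_pos.2 h
  have hexp : ∫ y in Ioi (0:ℝ), exp (-(α - u / x) * y) = 1 / (α - u / x) := by
    rw [integral_exp_mul_Ioi (neg_neg_of_pos hb), mul_zero, exp_zero, neg_div_neg_eq]
  rw [← hexp]
  have hα : 0 < α := (div_nonneg hu hx.le).trans_lt h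
  refine setIntegral_mono_on (integrableOn_exp_mul_one_add_div_rpow hα hx u)
    (exp_neg_integrableOn_Ioi 0 hb) measurableSet_Ioi fun y (hy : 0 < y) => ?_
  calc exp (-α * y) * (1 + y / x) ^ u ≤ exp (-α * y) * exp (y / x) ^ u := by
        gcongr
        exact add_one_le_exp _ |>.trans_eq' (add_comm _ _)
    _ = exp (-(α - u / x) * y) := by rw [← exp_mul, ← exp_add]; ring_nf

theorem exists_expPowIntegral_eq (hα : 0 < α) (hu : 1 ≤ u) {b : ℝ} (hb : 1 / α < b) :
    ∃ x ∈ Ioi (0:ℝ), expPowIntegral α x u = b := by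
  have hb₀ : 0 < b := (one_div_pos.2 hα).trans hb
  have hu₀ : 0 < u := by linarith
  have hαb : 0 < α - 1 / b := sub_pos.2 ((one_div_lt hα hb₀).1 hb)
  -- `x₀` lifts the lower bound `1/α + 1/(xα²)` above `b`; at `x₁` the upper bound equals `b`
  set x₀ := 1 / (α ^ 2 * b)
  set x₁ := u / (α - 1 / b)
  have hx₀ : 0 < x₀ := by positivity
  have hx₁ : 0 < x₁ := by positivity
  have hb_le₀ : b ≤ expPowIntegral α x₀ u := calc
    b ≤ 1 / α + 1 / (x₀ * α ^ 2) := by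
      have : 1 / (x₀ * α ^ 2) = b := by simp only [x₀]; field_simp
      linarith [one_div_pos.2 hα]
    _ = expPowIntegral α x₀ 1 := (expPowIntegral_one hα x₀).symm
    _ ≤ expPowIntegral α x₀ u := (expPowIntegral_strictMono hα hx₀).monotone hu
  have hux₁ : u / x₁ = α - 1 / b := by simp only [x₁]; field_simp
  have hle_b₁ : expPowIntegral α x₁ u ≤ b := calc
    expPowIntegral α x₁ u ≤ 1 / (α - u / x₁) :=
      expPowIntegral_le hx₁ hu₀.le (by rw [hux₁]; linarith [one_div_pos.2 hb₀])
    _ = b := by rw [hux₁, sub_sub_cancel, one_div_one_div]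
  have hseg := ordConnected_Ioi.uIcc_subset (mem_Ioi.2 hx₀) (mem_Ioi.2 hx₁)
  obtain ⟨x, hx, hKx⟩ := intermediate_value_uIcc
    ((continuousOn_expPowIntegral hα hu₀.le).mono hseg) (mem_uIcc.2 (Or.inr ⟨hle_b₁, hb_le₀⟩))
  exact ⟨x, hseg hx, hKx⟩

end expPowIntegral

theorem phi_exists_unique_strict_mono
    (a lam alpha : ℝ)
    (ha : a < 0) (hlam : 0 < lam) (halpha : 0 < alpha)
    (hsub : lam / (-a * alpha) < 1)
    (F : ℝ → ℝ → ℝ)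
    (hF : ∀ x u : ℝ, 0 < x → 0 ≤ u →
      F x u = lam / (-a) * ∫ y in Set.Ioi (0:ℝ), Real.exp (-alpha * y) * (1 + y / x) ^ u) :
    (∀ u : ℝ, 1 ≤ u → ∃! x : ℝ, x ∈ Set.Ioi (0:ℝ) ∧ F x u = 1) ∧
    (∀ φ : ℝ → ℝ, (∀ u : ℝ, 1 ≤ u → φ u ∈ Set.Ioi (0:ℝ) ∧ F (φ u) u = 1) →
      StrictMonoOn φ (Set.Ici 1)) := by
  set c := lam / -a
  have hc : 0 < c := div_pos hlam (neg_pos.2 ha)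
  have hcα : c < alpha := by
    rwa [div_lt_one (mul_pos (neg_pos.2 ha) halpha), ← div_lt_iff₀' (neg_pos.2 ha)] at hsub
  have hF_eq_one : ∀ u, 1 ≤ u → ∀ x ∈ Ioi (0:ℝ), F x u = 1 ↔ expPowIntegral alpha x u = c⁻¹ :=
    fun u hu x hx => by
      rw [hF x u hx (by linarith), ← mul_eq_one_iff_eq_inv₀ hc.ne', mul_comm]; rfl
  have hanti : ∀ u, 1 ≤ u → StrictAntiOn (fun x => expPowIntegral alpha x u) (Ioi 0) :=
    fun u hu => expPowIntegral_strictAntiOn halpha (by linarith)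
  refine ⟨fun u hu => ?_, fun φ hφ u hu v hv huv => ?_⟩
  · obtain ⟨x, hx, hKx⟩ := exists_expPowIntegral_eq halpha hu (b := c⁻¹)
      (by rwa [one_div, inv_lt_inv₀ halpha hc])
    refine ⟨x, ⟨hx, (hF_eq_one u hu x hx).2 hKx⟩, fun y ⟨hy, hFy⟩ => ?_⟩
    exact (hanti u hu).injOn hy hx (((hF_eq_one u hu y hy).1 hFy).trans hKx.symm)
  · obtain ⟨hφu, hKu⟩ := hφ u hu
    obtain ⟨hφv, hKv⟩ := hφ v hv
    rw [hF_eq_one u hu _ hφu] at hKu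
    rw [hF_eq_one v hv _ hφv] at hKv
    refine ((hanti v hv).lt_iff_gt hφv hφu).1 ?_
    calc expPowIntegral alpha (φ v) v = expPowIntegral alpha (φ u) u := hKv.trans hKu.symm
      _ < expPowIntegral alpha (φ u) v := expPowIntegral_strictMono halpha hφu huv
end

section
/- Let a < 0, λ > 0, α > 0 and γ > 1, and define σ'(x) = −a γ x^{γ−1} − λ e^{α x} ∫ₓ^∞ e^{−α y} γ y^{γ−1} dy for x ≥ 0. Then σ'(0) < 0 and σ'(x) → +∞ as x → ∞. -/
/-!
For `y ≥ x > 0`, `log y - log x ≤ (y - x) / x` gives `y ^ (γ - 1) ≤ x ^ (γ - 1) * exp (c * (y - x))`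
as soon as `γ - 1 ≤ c x`. For large `x` this holds with a fixed `c < α`, and integrating against
`exp (-α y)` bounds the tail term by `λ γ x ^ (γ - 1) / (α - c)`. Choosing `c` so small that
`λ / (α - c) < -a` leaves `σ' x ≥ γ δ x ^ (γ - 1)` with `δ > 0`. At `0` the tail integral is a
Gamma integral, so `σ' 0 = -λ Γ(γ + 1) / α ^ γ`.
-/

open Real Set Filter MeasureTheory

noncomputable def sigmaDensity (a lam alpha gam x : ℝ) : ℝ :=
  -a * gam * x ^ (gam - 1) -
    lam * exp (alpha * x) * ∫ y in Ioi x, exp (-alpha * y) * (gam * y ^ (gam - 1))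

lemma rpow_le_rpow_mul_exp_mul_sub {p c x y : ℝ} (hp : 0 ≤ p) (hx : 0 < x) (hxy : x ≤ y)
    (hpc : p ≤ c * x) : y ^ p ≤ x ^ p * exp (c * (y - x)) := by
  have hy : 0 < y := hx.trans_le hxy
  have hlog : log y - log x ≤ (y - x) / x := by
    rw [← log_div hy.ne' hx.ne', sub_div, div_self hx.ne']
    exact log_le_sub_one_of_pos (div_pos hy hx)
  have hslope : p * ((y - x) / x) ≤ c * (y - x) := by
    rw [mul_div_assoc', div_le_iff₀ hx]
    nlinarith [sub_nonneg.2 hxy]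
  rw [rpow_def_of_pos hy, rpow_def_of_pos hx, ← exp_add, exp_le_exp]
  nlinarith [mul_le_mul_of_nonneg_left hlog hp]

lemma exp_mul_setIntegral_Ioi_le_of_le_mul_exp {alpha c x : ℝ} {g : ℝ → ℝ} (hc : c < alpha)
    (hg : IntegrableOn (fun y => exp (-alpha * y) * g y) (Ioi x))
    (hgx : ∀ y, x < y → g y ≤ g x * exp (c * (y - x))) :
    exp (alpha * x) * ∫ y in Ioi x, exp (-alpha * y) * g y ≤ g x / (alpha - c) := by
  have hdom : ∀ y ∈ Ioi x, exp (-alpha * y) * g y ≤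
      g x * exp (-(c * x)) * exp ((c - alpha) * y) := fun y hy => by
    calc exp (-alpha * y) * g y ≤ exp (-alpha * y) * (g x * exp (c * (y - x))) :=
          mul_le_mul_of_nonneg_left (hgx y hy) (exp_nonneg _)
      _ = g x * exp (-(c * x)) * exp ((c - alpha) * y) := by
          rw [mul_left_comm, ← exp_add, mul_assoc, ← exp_add]; ring_nf
  have hint : IntegrableOn (fun y => g x * exp (-(c * x)) * exp ((c - alpha) * y)) (Ioi x) := by
    have h := (exp_neg_integrableOn_Ioi x (sub_pos.2 hc)).const_mul (g x * exp (-(c * x)))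
    simp only [neg_sub] at h
    exact h
  calc exp (alpha * x) * ∫ y in Ioi x, exp (-alpha * y) * g y
      ≤ exp (alpha * x) * ∫ y in Ioi x, g x * exp (-(c * x)) * exp ((c - alpha) * y) :=
        mul_le_mul_of_nonneg_left (setIntegral_mono_on hg hint measurableSet_Ioi hdom)
          (exp_nonneg _)
    _ = g x * (exp (alpha * x) * (exp (-(c * x)) * exp ((c - alpha) * x))) / (alpha - c) := by
        rw [integral_const_mul, integral_exp_mul_Ioi (sub_neg.2 hc), neg_div, ← div_neg, neg_sub]
        ring
    _ = g x / (alpha - c) := by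
        rw [← exp_add, ← exp_add, show alpha * x + (-(c * x) + (c - alpha) * x) = 0 by ring,
          exp_zero, mul_one]

lemma integrableOn_exp_neg_mul_mul_rpow_Ioi {alpha gam x : ℝ} (halpha : 0 < alpha)
    (hgam : 0 < gam) (hx : 0 ≤ x) :
    IntegrableOn (fun y => exp (-alpha * y) * (gam * y ^ (gam - 1))) (Ioi x) := by
  have h := (integrableOn_rpow_mul_exp_neg_mul_rpow (s := gam - 1) (p := 1) (by linarith) one_pos
    halpha).const_mul gam
  refine IntegrableOn.mono_set (IntegrableOn.congr_fun h (fun y _ => ?_) measurableSet_Ioi)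
    (Ioi_subset_Ioi hx)
  simp only [rpow_one]
  ring

lemma sigmaDensity_zero {a lam alpha gam : ℝ} (halpha : 0 < alpha) (hgam : 1 < gam) :
    sigmaDensity a lam alpha gam 0 = -(lam * Gamma (gam + 1) / alpha ^ gam) := by
  have hint : ∫ y in Ioi 0, exp (-alpha * y) * (gam * y ^ (gam - 1)) =
      gam * ((1 / alpha) ^ gam * Gamma gam) := by
    rw [← integral_rpow_mul_exp_neg_mul_Ioi (by linarith) halpha, ← integral_const_mul]
    refine setIntegral_congr_fun measurableSet_Ioi (fun y _ => ?_)
    ring_nf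
  rw [sigmaDensity, hint, zero_rpow (by linarith), Gamma_add_one (by linarith), one_div,
    inv_rpow halpha.le]
  field_simp
  simp

lemma mul_rpow_le_sigmaDensity {a lam alpha gam c x : ℝ} (hlam : 0 ≤ lam) (halpha : 0 < alpha)
    (hgam : 1 ≤ gam) (hc : c < alpha) (hx : 0 < x) (hcx : gam - 1 ≤ c * x) :
    gam * (-a - lam / (alpha - c)) * x ^ (gam - 1) ≤ sigmaDensity a lam alpha gam x := by
  have htail := exp_mul_setIntegral_Ioi_le_of_le_mul_exp (g := fun y => gam * y ^ (gam - 1)) hc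
    (integrableOn_exp_neg_mul_mul_rpow_Ioi halpha (by linarith) hx.le) fun y hy => by
      rw [mul_assoc]
      exact mul_le_mul_of_nonneg_left
        (rpow_le_rpow_mul_exp_mul_sub (by linarith) hx hy.le hcx) (by linarith)
  have hlam_tail := mul_le_mul_of_nonneg_left htail hlam
  rw [sigmaDensity]
  calc gam * (-a - lam / (alpha - c)) * x ^ (gam - 1)
      = -a * gam * x ^ (gam - 1) - lam * (gam * x ^ (gam - 1) / (alpha - c)) := by ring
    _ ≤ _ := by linarith

lemma tendsto_sigmaDensity_atTop {a lam alpha gam : ℝ} (ha : a < 0) (hlam : 0 ≤ lam)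
    (halpha : 0 < alpha) (hgam : 1 < gam) (hsub : lam < -a * alpha) :
    Tendsto (sigmaDensity a lam alpha gam) atTop atTop := by
  have hna : 0 < -a := neg_pos.2 ha
  have hq : 0 ≤ lam / -a := div_nonneg hlam hna.le
  obtain ⟨c, hc0, hc⟩ : ∃ c, 0 < c ∧ c < alpha - lam / -a :=
    exists_between (by rw [sub_pos, div_lt_iff₀ hna]; linarith)
  have hδ : lam / (alpha - c) < -a := by
    rw [div_lt_iff₀ (by linarith)]
    have := (div_lt_iff₀ hna).1 (lt_sub_comm.1 hc)
    linarith
  refine tendsto_atTop_mono' atTop ?_ ((tendsto_rpow_atTop (show 0 < gam - 1 by linarith))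
    |>.const_mul_atTop (mul_pos (show 0 < gam by linarith) (sub_pos.2 hδ)))
  filter_upwards [eventually_gt_atTop 0, eventually_ge_atTop ((gam - 1) / c)] with x hx hcx
  exact mul_rpow_le_sigmaDensity hlam halpha hgam.le (by linarith) hx
    (by rwa [div_le_iff₀ hc0, mul_comm] at hcx)

theorem sigma_density_neg_at_zero_tendsto_atTop
    (a lam alpha gam : ℝ)
    (ha : a < 0) (hlam : 0 < lam) (halpha : 0 < alpha) (hgam : 1 < gam)
    (hsub : lam / (-a * alpha) < 1)
    (s : ℝ → ℝ)
    (hs : ∀ x : ℝ, 0 ≤ x →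
      s x = -a * gam * x ^ (gam - 1) -
        lam * Real.exp (alpha * x) *
          ∫ y in Set.Ioi x, Real.exp (-alpha * y) * (gam * y ^ (gam - 1))) :
    s 0 < 0 ∧ Filter.Tendsto s Filter.atTop Filter.atTop := by
  have hσ : ∀ x, 0 ≤ x → s x = sigmaDensity a lam alpha gam x := hs
  refine ⟨?_, ?_⟩
  · rw [hσ 0 le_rfl, sigmaDensity_zero halpha hgam, neg_lt_zero]
    have := Gamma_pos_of_pos (show 0 < gam + 1 by linarith)
    positivity
  · refine (tendsto_sigmaDensity_atTop ha hlam.le halpha hgam ?_).congr'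
      ((eventually_ge_atTop 0).mono fun x hx => (hσ x hx).symm)
    exact (div_lt_one (mul_pos (neg_pos.2 ha) halpha)).1 hsub
end
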